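/- arXiv:1302.2803 — 3 statements merged into one kernel-verified Lean document; each statement's English description precedes it below -/
import Mathlib

section
/- Let H be a complex Hilbert space, let (V_n)_{n∈ℕ} be a sequence of bounded linear operators on H and V a bounded linear operator on H. If V_n → V in the operator norm of B(H) and V_n V = V V_n for every n ∈ ℕ, then lim_{n→∞} r(V_n) = r(V). -/
/-!
For commuting `a` and `b` the binomial theorem bounds `‖(a + b) ^ n‖` by products of bounds for
`‖a ^ k‖` and `‖b ^ (n - k)‖`, so Gelfand's formula gives `r(a + b) ≤ r(a) + r(b)`. Together with
`r(a) ≤ ‖a‖` this makes the spectral radius `1`-Lipschitz on commuting pairs: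
`|r(a) - r(b)| ≤ r(a - b) ≤ ‖a - b‖`.
-/

open Filter Topology Finset

lemma Commute.norm_add_pow_le {A : Type*} [NormedRing A] {a b : A} (hab : Commute a b)
    {C D s t : ℝ} (ha : ∀ n, ‖a ^ n‖ ≤ C * s ^ n) (hb : ∀ n, ‖b ^ n‖ ≤ D * t ^ n) (n : ℕ) :
    ‖(a + b) ^ n‖ ≤ C * D * (s + t) ^ n := by
  have term_le (i j : ℕ) : ‖a ^ i * b ^ j‖ ≤ C * s ^ i * (D * t ^ j) :=
    (norm_mul_le _ _).trans <|
      mul_le_mul (ha i) (hb j) (norm_nonneg _) ((norm_nonneg _).trans (ha i))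
  calc ‖(a + b) ^ n‖
      = ‖∑ m ∈ antidiagonal n, n.choose m.1 • (a ^ m.1 * b ^ m.2)‖ := by rw [hab.add_pow']
    _ ≤ ∑ m ∈ antidiagonal n, n.choose m.1 * (C * s ^ m.1 * (D * t ^ m.2)) :=
        (norm_sum_le _ _).trans <| sum_le_sum fun m _ =>
          norm_nsmul_le.trans (by gcongr; exact term_le _ _)
    _ = C * D * (s + t) ^ n := by
        rw [(Commute.all s t).add_pow', mul_sum]
        refine sum_congr rfl fun m _ => ?_
        rw [nsmul_eq_mul]
        ring

lemma spectralRadius_ne_top {𝕜 A : Type*} [NontriviallyNormedField 𝕜] [NormedRing A]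
    [NormedAlgebra 𝕜 A] [CompleteSpace A] (a : A) : spectralRadius 𝕜 a ≠ ⊤ :=
  ne_top_of_le_ne_top (by simp [ENNReal.mul_eq_top])
    (spectrum.spectralRadius_le_pow_nnnorm_pow_one_div 𝕜 a 0)

section ComplexBanachAlgebra

variable {A : Type*} [NormedRing A] [NormedAlgebra ℂ A] [CompleteSpace A]

lemma tendsto_norm_pow_rpow_one_div_toReal_spectralRadius (a : A) :
    Tendsto (fun n : ℕ => ‖a ^ n‖ ^ (1 / n : ℝ)) atTop (𝓝 (spectralRadius ℂ a).toReal) :=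
  ((ENNReal.tendsto_toReal (spectralRadius_ne_top a)).comp
    (spectrum.pow_norm_pow_one_div_tendsto_nhds_spectralRadius a)).congr fun n => by
      simp [ENNReal.toReal_ofReal (Real.rpow_nonneg (norm_nonneg _) _)]

lemma toReal_spectralRadius_le_of_norm_pow_le {a : A} {C s : ℝ} (hs : 0 ≤ s)
    (h : ∀ᶠ n in atTop, ‖a ^ n‖ ≤ C * s ^ n) : (spectralRadius ℂ a).toReal ≤ s := by
  set K := max C 1
  have hK : 0 < K := lt_max_of_lt_right one_pos
  have root_le : ∀ᶠ n : ℕ in atTop, ‖a ^ n‖ ^ (1 / n : ℝ) ≤ K ^ (1 / n : ℝ) * s := by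
    filter_upwards [h, eventually_ge_atTop 1] with n hn hn1
    have hn0 : (n : ℝ) ≠ 0 := by positivity
    calc ‖a ^ n‖ ^ (1 / n : ℝ) ≤ (K * s ^ n) ^ (1 / n : ℝ) := by
          gcongr
          exact hn.trans (by gcongr; exact le_max_left _ _)
      _ = K ^ (1 / n : ℝ) * s := by
          rw [Real.mul_rpow hK.le (by positivity), ← Real.rpow_natCast,
            ← Real.rpow_mul hs, mul_one_div_cancel hn0, Real.rpow_one]
  have root_K : Tendsto (fun n : ℕ => K ^ (1 / n : ℝ)) atTop (𝓝 1) := by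
    simpa [Function.comp_def] using ((Real.continuousAt_const_rpow hK.ne').tendsto.comp
      tendsto_one_div_atTop_nhds_zero_nat)
  exact le_of_tendsto_of_tendsto (tendsto_norm_pow_rpow_one_div_toReal_spectralRadius a)
    (by simpa using root_K.mul_const s) root_le

lemma toReal_spectralRadius_le_norm (a : A) : (spectralRadius ℂ a).toReal ≤ ‖a‖ :=
  toReal_spectralRadius_le_of_norm_pow_le (C := 1) (norm_nonneg a) <|
    (eventually_ge_atTop 1).mono fun _ hn => (one_mul (‖a‖ ^ _)).symm ▸ norm_pow_le' a hn

lemma exists_norm_pow_le_mul_pow (a : A) {s : ℝ} (hs : (spectralRadius ℂ a).toReal < s) :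
    ∃ C, ∀ n, ‖a ^ n‖ ≤ C * s ^ n := by
  have hs0 : 0 < s := ENNReal.toReal_nonneg.trans_lt hs
  have eventually_le : ∀ᶠ n : ℕ in atTop, ‖a ^ n‖ ≤ s ^ n := by
    filter_upwards [(tendsto_norm_pow_rpow_one_div_toReal_spectralRadius a).eventually
      (eventually_lt_nhds hs), eventually_ge_atTop 1] with n hn hn1
    have hn0 : (n : ℝ) ≠ 0 := by positivity
    calc ‖a ^ n‖ = (‖a ^ n‖ ^ (1 / n : ℝ)) ^ n := by
          rw [← Real.rpow_natCast, ← Real.rpow_mul (norm_nonneg _), one_div_mul_cancel hn0,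
            Real.rpow_one]
      _ ≤ s ^ n := by gcongr
  have isBigO : (fun n => ‖a ^ n‖) =O[⊤] (fun n => s ^ n) :=
    (Asymptotics.IsBigO.of_bound 1 (by simpa [abs_of_pos hs0] using eventually_le)).nat_of_atTop
      fun n hn => absurd hn (pow_ne_zero n hs0.ne')
  obtain ⟨C, hC⟩ := Asymptotics.isBigO_top.1 isBigO
  exact ⟨C, fun n => by simpa [abs_of_pos hs0] using hC n⟩

lemma Commute.toReal_spectralRadius_add_le {a b : A} (hab : Commute a b) :
    (spectralRadius ℂ (a + b)).toReal ≤
      (spectralRadius ℂ a).toReal + (spectralRadius ℂ b).toReal := by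
  refine le_of_forall_pos_le_add fun ε hε => ?_
  obtain ⟨C, hC⟩ := exists_norm_pow_le_mul_pow a (lt_add_of_pos_right _ (half_pos hε))
  obtain ⟨D, hD⟩ := exists_norm_pow_le_mul_pow b (lt_add_of_pos_right _ (half_pos hε))
  have bound := toReal_spectralRadius_le_of_norm_pow_le
    (add_nonneg (add_nonneg ENNReal.toReal_nonneg (half_pos hε).le)
      (add_nonneg ENNReal.toReal_nonneg (half_pos hε).le))
    (Eventually.of_forall (hab.norm_add_pow_le hC hD))
  linarith

lemma Commute.abs_toReal_spectralRadius_sub_le {a b : A} (hab : Commute a b) :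
    |(spectralRadius ℂ a).toReal - (spectralRadius ℂ b).toReal| ≤ ‖a - b‖ := by
  have one_sided {x y : A} (hxy : Commute x y) :
      (spectralRadius ℂ x).toReal ≤ (spectralRadius ℂ y).toReal + ‖x - y‖ := by
    have := (hxy.symm.sub_right (Commute.refl y)).toReal_spectralRadius_add_le
    rw [add_sub_cancel] at this
    linarith [toReal_spectralRadius_le_norm (x - y)]
  exact abs_sub_le_iff.2 ⟨by linarith [one_sided hab], by
    linarith [one_sided hab.symm, norm_sub_rev a b]⟩

end ComplexBanachAlgebra

/-- If `Vₙ → V` in operator norm and each `Vₙ` commutes with `V`, then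
`r(Vₙ) → r(V)`. -/
theorem tendsto_spectralRadius_of_tendsto_of_commute
    {H : Type*} [NormedAddCommGroup H] [InnerProductSpace ℂ H] [CompleteSpace H]
    (V : ℕ → H →L[ℂ] H) (W : H →L[ℂ] H)
    (hlim : Filter.Tendsto V Filter.atTop (nhds W))
    (hcomm : ∀ n : ℕ, V n * W = W * V n) :
    Filter.Tendsto (fun n => (spectralRadius ℂ (V n)).toReal) Filter.atTop
      (nhds ((spectralRadius ℂ W).toReal)) := by
  rw [tendsto_iff_norm_sub_tendsto_zero] at hlim ⊢
  exact squeeze_zero (fun n => norm_nonneg _)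
    (fun n => (Commute.abs_toReal_spectralRadius_sub_le (hcomm n)).trans_eq' (Real.norm_eq_abs _))
    hlim
end

section
/- Let f(z) = ∑_{n=0}^∞ a_n z^n be a power series with complex coefficients convergent on the open disk D(0,R) ⊂ ℂ with R > 0, and let f_a(z) := ∑_{n=0}^∞ |a_n| z^n. Let A, B be commuting bounded linear operators on a complex Hilbert space H, and let p > 1, q > 1 with 1/p + 1/q = 1. If ‖A‖^p < R and ‖B‖^q < R, then r(f(AB)) ≤ f_a(r(A)^p)^{1/p} · f_a(r(B)^q)^{1/q}. -/
/-!
In the closed subalgebra generated by `x`, which is commutative, every spectral value of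
`f(x) = ∑ aₙ xⁿ` is `φ (f x) = f (φ x)` for a character `φ`, and `‖φ x‖ ≤ r(x)`; hence
`r(f(x)) ≤ f_a(r(x))`. For `x = AB` Gelfand's formula gives `r(AB) ≤ r(A) r(B)`, and Hölder's
inequality for the sequences `|aₙ|^(1/p) r(A)ⁿ` and `|aₙ|^(1/q) r(B)ⁿ` bounds `f_a(r(A) r(B))`.
-/

open scoped ENNReal NNReal

theorem summable_norm_mul_pow_of_lt_norm {𝕜 : Type*} [NormedField 𝕜] {a : ℕ → 𝕜} {z : 𝕜}
    (hz : Summable fun n => a n * z ^ n) {x : ℝ} (hx0 : 0 ≤ x) (hx : x < ‖z‖) :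
    Summable fun n => ‖a n‖ * x ^ n := by
  obtain ⟨C, hC⟩ := hz.tendsto_atTop_zero.norm.bddAbove_range
  have hz0 : 0 < ‖z‖ := hx0.trans_lt hx
  refine ((summable_geometric_of_lt_one (div_nonneg hx0 hz0.le) ((div_lt_one hz0).2 hx)).mul_left
    C).of_nonneg_of_le (fun n => by positivity) fun n => ?_
  calc ‖a n‖ * x ^ n = ‖a n * z ^ n‖ * (x / ‖z‖) ^ n := by
        rw [norm_mul, norm_pow, div_pow, mul_assoc, mul_div_cancel₀ _ (pow_pos hz0 n).ne']
    _ ≤ C * (x / ‖z‖) ^ n := by gcongr; exact hC (Set.mem_range_self n)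

theorem summable_norm_mul_pow_of_lt {a : ℕ → ℂ} {R : ℝ}
    (hconv : ∀ z : ℂ, ‖z‖ < R → Summable fun n => a n * z ^ n) {x : ℝ} (hx0 : 0 ≤ x)
    (hxR : x < R) : Summable fun n => ‖a n‖ * x ^ n := by
  obtain ⟨t, hxt, htR⟩ := exists_between hxR
  have ht : ‖(t : ℂ)‖ = t := by rw [Complex.norm_real, Real.norm_of_nonneg (hx0.trans hxt.le)]
  exact summable_norm_mul_pow_of_lt_norm (hconv t (by rwa [ht])) hx0 (by rwa [ht])

namespace Real

theorem mul_lt_of_rpow_lt {p q x y R : ℝ} (hpq : p.HolderConjugate q) (hx : 0 ≤ x) (hy : 0 ≤ y)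
    (hxR : x ^ p < R) (hyR : y ^ q < R) : x * y < R :=
  have := hpq.pos; have := hpq.symm.pos
  calc x * y ≤ x ^ p / p + y ^ q / q := young_inequality_of_nonneg hx hy hpq
    _ < R / p + R / q := by gcongr
    _ = R * (p⁻¹ + q⁻¹) := by ring
    _ = R := by rw [hpq.inv_add_inv_eq_one, mul_one]

end Real

namespace spectrum

variable {𝕜 A : Type*} [NormedField 𝕜] [NormedRing A] [NormedAlgebra 𝕜 A] [CompleteSpace A]

theorem spectralRadius_ne_top (a : A) : spectralRadius 𝕜 a ≠ ∞ :=
  ((spectralRadius_le_pow_nnnorm_pow_one_div 𝕜 a 0).trans_lt (by simp [ENNReal.mul_lt_top])).ne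

theorem norm_le_toReal_spectralRadius {a : A} {k : 𝕜} (hk : k ∈ spectrum 𝕜 a) :
    ‖k‖ ≤ (spectralRadius 𝕜 a).toReal := by
  simpa using ENNReal.toReal_mono (spectralRadius_ne_top a) (le_iSup₂ (α := ℝ≥0∞) k hk)

theorem toReal_spectralRadius_le_norm [NormOneClass A] (a : A) :
    (spectralRadius 𝕜 a).toReal ≤ ‖a‖ := by
  simpa using ENNReal.toReal_mono (by simp) (spectralRadius_le_nnnorm (𝕜 := 𝕜) a)

end spectrum

section SpectralRadius

variable {A : Type*} [NormedRing A] [NormedAlgebra ℂ A] [CompleteSpace A]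

-- Gelfand's formula only involves the norms of powers, which a subalgebra inherits.
theorem Subalgebra.spectralRadius_coe (S : Subalgebra ℂ A) [CompleteSpace S] (x : S) :
    spectralRadius ℂ (x : A) = spectralRadius ℂ x :=
  tendsto_nhds_unique (spectrum.pow_nnnorm_pow_one_div_tendsto_nhds_spectralRadius (x : A)) <| by
    simp_rw [← SubmonoidClass.coe_pow]
    exact spectrum.pow_nnnorm_pow_one_div_tendsto_nhds_spectralRadius x

theorem Commute.spectralRadius_mul_le {a b : A} (hab : Commute a b) :
    spectralRadius ℂ (a * b) ≤ spectralRadius ℂ a * spectralRadius ℂ b := by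
  refine le_of_tendsto_of_tendsto' (spectrum.pow_nnnorm_pow_one_div_tendsto_nhds_spectralRadius _)
    (ENNReal.Tendsto.mul (spectrum.pow_nnnorm_pow_one_div_tendsto_nhds_spectralRadius a)
      (.inr (spectrum.spectralRadius_ne_top b))
      (spectrum.pow_nnnorm_pow_one_div_tendsto_nhds_spectralRadius b)
      (.inr (spectrum.spectralRadius_ne_top a))) fun n => ?_
  rw [← ENNReal.mul_rpow_of_nonneg _ _ (by positivity), hab.mul_pow, ← ENNReal.coe_mul]
  gcongr
  exact nnnorm_mul_le _ _

theorem spectralRadius_tsum_smul_pow_le_of_comm {S : Type*} [NormedCommRing S] [NormedAlgebra ℂ S]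
    [CompleteSpace S] (a : ℕ → ℂ) {y : S} {ρ : ℝ} (hy : Summable fun n => a n • y ^ n)
    (hρ : (spectralRadius ℂ y).toReal ≤ ρ) (hr : Summable fun n => ‖a n‖ * ρ ^ n) :
    spectralRadius ℂ (∑' n, a n • y ^ n) ≤ ENNReal.ofReal (∑' n, ‖a n‖ * ρ ^ n) := by
  refine iSup₂_le fun k hk => ?_
  obtain ⟨φ, rfl⟩ := WeakDual.CharacterSpace.mem_spectrum_iff_exists.mp hk
  have hφ : φ (∑' n, a n • y ^ n) = ∑' n, a n * φ y ^ n := by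
    simpa using hy.map_tsum φ (map_continuous φ)
  have hterm (n : ℕ) : ‖a n * φ y ^ n‖ ≤ ‖a n‖ * ρ ^ n := by
    rw [norm_mul, norm_pow]
    gcongr
    exact (spectrum.norm_le_toReal_spectralRadius (AlgHom.apply_mem_spectrum φ y)).trans hρ
  rw [← enorm_eq_nnnorm, ← ofReal_norm, hφ]
  exact ENNReal.ofReal_le_ofReal (tsum_of_norm_bounded hr.hasSum hterm)

theorem spectralRadius_tsum_smul_pow_le (a : ℕ → ℂ) {x : A} {ρ : ℝ}
    (hx : Summable fun n => ‖a n • x ^ n‖) (hρ : (spectralRadius ℂ x).toReal ≤ ρ)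
    (hr : Summable fun n => ‖a n‖ * ρ ^ n) :
    spectralRadius ℂ (∑' n, a n • x ^ n) ≤ ENNReal.ofReal (∑' n, ‖a n‖ * ρ ^ n) := by
  let S := Algebra.elemental ℂ x
  let _ : NormedCommRing S := { SubringClass.toNormedRing S with mul_comm := mul_comm }
  let y : S := ⟨x, Algebra.elemental.self_mem ℂ x⟩
  have hy : Summable fun n => a n • y ^ n := Summable.of_norm hx
  have hcoe : ((∑' n, a n • y ^ n : S) : A) = ∑' n, a n • x ^ n :=
    hy.map_tsum S.val continuous_subtype_val
  have hry : spectralRadius ℂ y = spectralRadius ℂ x := (S.spectralRadius_coe y).symm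
  rw [← hcoe, S.spectralRadius_coe]
  exact spectralRadius_tsum_smul_pow_le_of_comm a hy (hry ▸ hρ) hr

end SpectralRadius

theorem tsum_mul_mul_pow_le_holder {c : ℕ → ℝ} (hc : ∀ n, 0 ≤ c n) {p q x y : ℝ}
    (hpq : p.HolderConjugate q) (hx : 0 ≤ x) (hy : 0 ≤ y)
    (hxs : Summable fun n => c n * (x ^ p) ^ n) (hys : Summable fun n => c n * (y ^ q) ^ n) :
    ∑' n, c n * (x * y) ^ n ≤
      (∑' n, c n * (x ^ p) ^ n) ^ (1 / p) * (∑' n, c n * (y ^ q) ^ n) ^ (1 / q) := by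
  have hpow {r z : ℝ} (hz : 0 ≤ z) (hr : 0 < r) (n : ℕ) :
      (c n ^ (1 / r) * z ^ n) ^ r = c n * (z ^ r) ^ n := by
    rw [Real.mul_rpow (by positivity [hc n]) (by positivity), ← Real.rpow_mul (hc n),
      one_div_mul_cancel hr.ne', Real.rpow_one, ← Real.rpow_natCast, ← Real.rpow_mul hz,
      mul_comm (n : ℝ), Real.rpow_mul hz, Real.rpow_natCast]
  have hmul (n : ℕ) : c n * (x * y) ^ n = (c n ^ (1 / p) * x ^ n) * (c n ^ (1 / q) * y ^ n) := by
    rw [mul_mul_mul_comm, ← Real.rpow_add' (hc n) (by simp [hpq.inv_add_inv_eq_one]),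
      one_div, one_div, hpq.inv_add_inv_eq_one, Real.rpow_one, mul_pow]
  simp_rw [hmul, ← hpow hx hpq.pos, ← hpow hy hpq.symm.pos] at hxs hys ⊢
  exact Real.inner_le_Lp_mul_Lq_tsum_of_nonneg hpq (fun n => by positivity [hc n])
    (fun n => by positivity [hc n]) hxs hys

theorem spectralRadius_powerSeries_mul_le_holder_general
    {H : Type*} [NormedAddCommGroup H] [InnerProductSpace ℂ H] [CompleteSpace H]
    (a : ℕ → ℂ) (R : ℝ)
    (hconv : ∀ z : ℂ, ‖z‖ < R → Summable fun n : ℕ => a n * z ^ n)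
    (A B : H →L[ℂ] H) (hcomm : A * B = B * A)
    (p q : ℝ) (hp : 1 < p) (hpq : 1 / p + 1 / q = 1)
    (hA : ‖A‖ ^ p < R) (hB : ‖B‖ ^ q < R) :
    (spectralRadius ℂ (∑' n : ℕ, a n • (A * B) ^ n)).toReal ≤
      (∑' n : ℕ, ‖a n‖ * ((spectralRadius ℂ A).toReal ^ p) ^ n) ^ (1 / p) *
        (∑' n : ℕ, ‖a n‖ * ((spectralRadius ℂ B).toReal ^ q) ^ n) ^ (1 / q) := by
  -- `toReal_spectralRadius_le_norm` needs `NormOneClass (H →L[ℂ] H)`, i.e. a nontrivial `H`.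
  rcases subsingleton_or_nontrivial H with hH | hH
  · simp [spectralRadius, spectrum.of_subsingleton]
    positivity
  have hpq' : p.HolderConjugate q :=
    Real.holderConjugate_iff.2 ⟨hp, by simpa only [one_div] using hpq⟩
  set rA := (spectralRadius ℂ A).toReal
  set rB := (spectralRadius ℂ B).toReal
  have hrA : rA ≤ ‖A‖ := spectrum.toReal_spectralRadius_le_norm A
  have hrB : rB ≤ ‖B‖ := spectrum.toReal_spectralRadius_le_norm B
  have hrAB : (spectralRadius ℂ (A * B)).toReal ≤ rA * rB := by
    rw [← ENNReal.toReal_mul]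
    exact ENNReal.toReal_mono (ENNReal.mul_ne_top (spectrum.spectralRadius_ne_top A)
      (spectrum.spectralRadius_ne_top B)) (Commute.spectralRadius_mul_le hcomm)
  have hnormAB : ‖A‖ * ‖B‖ < R :=
    Real.mul_lt_of_rpow_lt hpq' (norm_nonneg _) (norm_nonneg _) hA hB
  have hseries : Summable fun n => ‖a n • (A * B) ^ n‖ :=
    (summable_norm_mul_pow_of_lt hconv (norm_nonneg _)
      ((norm_mul_le A B).trans_lt hnormAB)).of_nonneg_of_le (fun _ => norm_nonneg _) fun n => by
        rw [norm_smul]; gcongr; exact norm_pow_le _ _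
  have hsumAB : Summable fun n => ‖a n‖ * (rA * rB) ^ n := summable_norm_mul_pow_of_lt hconv
    (by positivity) ((mul_le_mul hrA hrB (by positivity) (norm_nonneg _)).trans_lt hnormAB)
  have hsumA : Summable fun n => ‖a n‖ * (rA ^ p) ^ n := summable_norm_mul_pow_of_lt hconv
    (by positivity) ((Real.rpow_le_rpow (by positivity) hrA hpq'.nonneg).trans_lt hA)
  have hsumB : Summable fun n => ‖a n‖ * (rB ^ q) ^ n := summable_norm_mul_pow_of_lt hconv
    (by positivity) ((Real.rpow_le_rpow (by positivity) hrB hpq'.symm.nonneg).trans_lt hB)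
  calc _ ≤ ∑' n, ‖a n‖ * (rA * rB) ^ n :=
        ENNReal.toReal_le_of_le_ofReal (tsum_nonneg fun n => by positivity)
          (spectralRadius_tsum_smul_pow_le a hseries hrAB hsumAB)
    _ ≤ _ := tsum_mul_mul_pow_le_holder (fun n => norm_nonneg _) hpq' (by positivity)
        (by positivity) hsumA hsumB

/-- For commuting `A`, `B` with `‖A‖^p < R`, `‖B‖^q < R` (conjugate exponents
`p, q`), one has `r(f(AB)) ≤ f_a(r(A)^p)^{1/p} · f_a(r(B)^q)^{1/q}`. -/
theorem spectralRadius_powerSeries_mul_le_holder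
    {H : Type*} [NormedAddCommGroup H] [InnerProductSpace ℂ H] [CompleteSpace H]
    (a : ℕ → ℂ) (R : ℝ) (hR : 0 < R)
    (hconv : ∀ z : ℂ, ‖z‖ < R → Summable fun n : ℕ => a n * z ^ n)
    (A B : H →L[ℂ] H) (hcomm : A * B = B * A)
    (p q : ℝ) (hp : 1 < p) (hq : 1 < q) (hpq : 1 / p + 1 / q = 1)
    (hA : ‖A‖ ^ p < R) (hB : ‖B‖ ^ q < R) :
    (spectralRadius ℂ (∑' n : ℕ, a n • (A * B) ^ n)).toReal ≤
      (∑' n : ℕ, ‖a n‖ * ((spectralRadius ℂ A).toReal ^ p) ^ n) ^ (1 / p) *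
        (∑' n : ℕ, ‖a n‖ * ((spectralRadius ℂ B).toReal ^ q) ^ n) ^ (1 / q) :=
  spectralRadius_powerSeries_mul_le_holder_general a R hconv A B hcomm p q hp hpq hA hB
end

section
/- Let A, B be commuting bounded linear operators on a complex Hilbert space H. Then r(exp(AB)) ≤ (1/2)[ exp(‖AB‖) + exp(‖A²‖^{1/2} ‖B²‖^{1/2}) ], where exp(AB) = ∑_{n=0}^∞ (AB)^n/n! is the operator exponential. -/
/-!
Gelfand's formula gives `r(exp a) ≤ exp ρ` whenever `r(a) ≤ ρ`: for `ρ' > ρ` it bounds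
`‖a ^ k‖ ≤ C ρ' ^ k`, hence `‖exp a ^ n‖ = ‖exp (n • a)‖ ≤ C exp (n ρ')`, and the `n`-th roots
of these bounds tend to `exp ρ'`. For commuting `A`, `B` we have `(AB)² = A²B²`, so
`r(AB) ≤ ‖(AB)²‖^{1/2} ≤ ‖A²‖^{1/2} ‖B²‖^{1/2}`, as well as `r(AB) ≤ ‖AB‖`; hence
`r(exp(AB))` is bounded by the exponential of the smaller of the two, and a fortiori by the mean.
-/

open Filter Topology NormedSpace

theorem norm_exp_le_of_norm_pow_le (𝕂 : Type*) {𝔸 : Type*} [RCLike 𝕂] [NormedRing 𝔸]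
    [NormedAlgebra 𝕂 𝔸] [CompleteSpace 𝔸] {a : 𝔸} {C t : ℝ}
    (h : ∀ k, ‖a ^ k‖ ≤ C * t ^ k) : ‖exp a‖ ≤ C * Real.exp t := by
  refine (exp_series_hasSum_exp' (𝕂 := 𝕂) a).norm_le_of_bounded
    ((Real.exp_eq_exp_ℝ ▸ expSeries_div_hasSum_exp t).mul_left C) fun k => ?_
  rw [norm_smul, norm_inv, RCLike.norm_natCast, mul_div_assoc', div_eq_inv_mul]
  exact mul_le_mul_of_nonneg_left (h k) (by positivity)

theorem spectralRadius_le_ofReal_of_norm_pow_le {𝕜 A : Type*} [NormedField 𝕜] [NormedRing A]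
    [NormedAlgebra 𝕜 A] [CompleteSpace A] (h1 : ‖(1 : A)‖ ≤ 1) {a : A} {n : ℕ} (hn : n ≠ 0)
    {ρ : ℝ} (hρ : 0 ≤ ρ) (h : ‖a ^ n‖ ≤ ρ ^ n) : spectralRadius 𝕜 a ≤ ENNReal.ofReal ρ := by
  obtain ⟨m, rfl⟩ := Nat.exists_eq_succ_of_ne_zero hn
  refine (spectrum.spectralRadius_le_pow_nnnorm_pow_one_div 𝕜 a m).trans ?_
  have hnorm : (‖a ^ (m + 1)‖₊ : ENNReal) ≤ ENNReal.ofReal ρ ^ (m + 1) := by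
    rw [← ENNReal.ofReal_pow hρ, ← enorm_eq_nnnorm, ← ofReal_norm]
    exact ENNReal.ofReal_le_ofReal h
  have hone : (‖(1 : A)‖₊ : ENNReal) ^ (1 / (m + 1) : ℝ) ≤ 1 :=
    ENNReal.rpow_le_one (mod_cast h1) (by positivity)
  calc _ ≤ (ENNReal.ofReal ρ ^ (m + 1)) ^ (1 / (m + 1) : ℝ) * 1 := by gcongr
    _ = ENNReal.ofReal ρ := by
      rw [mul_one, one_div, ← Nat.cast_succ, ENNReal.pow_rpow_inv_natCast m.succ_ne_zero]

section

variable {A : Type*} [NormedRing A] [NormedAlgebra ℂ A] [CompleteSpace A]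

theorem norm_exp_pow_le_of_norm_pow_le {a : A} {C ρ : ℝ} (h : ∀ k, ‖a ^ k‖ ≤ C * ρ ^ k) (n : ℕ) :
    ‖exp a ^ n‖ ≤ C * Real.exp (n * ρ) := by
  let _ : NormedAlgebra ℚ A := NormedAlgebra.restrictScalars ℚ ℂ A
  rw [← exp_nsmul]
  refine norm_exp_le_of_norm_pow_le ℂ fun k => ?_
  calc ‖(n • a) ^ k‖ = ‖n ^ k • a ^ k‖ := by rw [smul_pow]
    _ ≤ (n : ℝ) ^ k * (C * ρ ^ k) := by grw [norm_nsmul_le, h k, Nat.cast_pow]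
    _ = C * (n * ρ) ^ k := by ring

theorem spectralRadius_exp_le_of_norm_pow_le {a : A} {C ρ : ℝ} (hC : 0 < C)
    (h : ∀ k, ‖a ^ k‖ ≤ C * ρ ^ k) :
    spectralRadius ℂ (exp a) ≤ ENNReal.ofReal (Real.exp ρ) := by
  have hroot : Tendsto (fun n : ℕ => ENNReal.ofReal (C ^ (1 / n : ℝ) * Real.exp ρ)) atTop
      (𝓝 (ENNReal.ofReal (Real.exp ρ))) := by
    have := (tendsto_const_nhds (x := C)).rpow tendsto_one_div_atTop_nhds_zero_nat (.inl hC.ne')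
    rw [Real.rpow_zero] at this
    simpa using (ENNReal.tendsto_ofReal (this.mul_const (Real.exp ρ)))
  refine le_of_tendsto_of_tendsto (spectrum.pow_norm_pow_one_div_tendsto_nhds_spectralRadius _)
    hroot ((eventually_ne_atTop 0).mono fun n hn => ENNReal.ofReal_le_ofReal ?_)
  calc ‖exp a ^ n‖ ^ (1 / n : ℝ) ≤ (C * Real.exp (n * ρ)) ^ (1 / n : ℝ) := by
        gcongr; exact norm_exp_pow_le_of_norm_pow_le h n
    _ = C ^ (1 / n : ℝ) * Real.exp ρ := by
        rw [Real.mul_rpow hC.le (Real.exp_pos _).le, ← Real.exp_mul]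
        field_simp

theorem exists_norm_pow_le_mul_pow_of_spectralRadius_lt {a : A} {ρ : ℝ}
    (h : spectralRadius ℂ a < ENNReal.ofReal ρ) : ∃ C > 0, ∀ k, ‖a ^ k‖ ≤ C * ρ ^ k := by
  have hρ : 0 < ρ := ENNReal.ofReal_pos.1 (pos_of_gt h)
  have hev : ∀ᶠ k : ℕ in atTop, ‖a ^ k‖ ≤ 1 * ‖ρ ^ k‖ := by
    filter_upwards [(spectrum.pow_norm_pow_one_div_tendsto_nhds_spectralRadius a).eventually
      (gt_mem_nhds h), eventually_ne_atTop 0] with k hk hk0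
    rw [ENNReal.ofReal_lt_ofReal_iff hρ, one_div] at hk
    rw [one_mul, Real.norm_of_nonneg (by positivity),
      ← Real.rpow_inv_natCast_pow (norm_nonneg (a ^ k)) hk0]
    gcongr
  obtain ⟨C, hC, hbound⟩ := Asymptotics.bound_of_isBigO_nat_atTop (.of_bound 1 hev)
  refine ⟨C, hC, fun k => ?_⟩
  simpa [abs_of_pos hρ] using hbound (pow_ne_zero k hρ.ne')

theorem spectralRadius_exp_le {a : A} {ρ : ℝ} (hρ : 0 ≤ ρ)
    (h : spectralRadius ℂ a ≤ ENNReal.ofReal ρ) :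
    spectralRadius ℂ (exp a) ≤ ENNReal.ofReal (Real.exp ρ) := by
  have hlt : ∀ ρ' > ρ, spectralRadius ℂ (exp a) ≤ ENNReal.ofReal (Real.exp ρ') := fun ρ' hρ' => by
    obtain ⟨C, hC, hpow⟩ := exists_norm_pow_le_mul_pow_of_spectralRadius_lt
      (h.trans_lt ((ENNReal.ofReal_lt_ofReal_iff (hρ.trans_lt hρ')).2 hρ'))
    exact spectralRadius_exp_le_of_norm_pow_le hC hpow
  exact ge_of_tendsto (((ENNReal.continuous_ofReal.comp Real.continuous_exp).tendsto ρ).mono_left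
    nhdsWithin_le_nhds) (eventually_nhdsWithin_of_forall (s := Set.Ioi ρ) hlt)

end

/-- For commuting `A`, `B`,
`r(exp(AB)) ≤ (1/2)[exp(‖AB‖) + exp(‖A²‖^{1/2} ‖B²‖^{1/2})]`. -/
theorem spectralRadius_exp_mul_le_kittaneh
    {H : Type*} [NormedAddCommGroup H] [InnerProductSpace ℂ H] [CompleteSpace H]
    (A B : H →L[ℂ] H) (hcomm : A * B = B * A) :
    (spectralRadius ℂ (∑' n : ℕ, ((n.factorial : ℂ))⁻¹ • (A * B) ^ n)).toReal ≤
      (1 / 2) * (Real.exp ‖A * B‖ +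
        Real.exp (Real.sqrt ‖A ^ 2‖ * Real.sqrt ‖B ^ 2‖)) := by
  set s := Real.sqrt ‖A ^ 2‖ * Real.sqrt ‖B ^ 2‖
  have hs : 0 ≤ s := by positivity
  have hsq : ‖(A * B) ^ 2‖ ≤ s ^ 2 := calc
    ‖(A * B) ^ 2‖ = ‖A ^ 2 * B ^ 2‖ := by rw [Commute.mul_pow hcomm 2]
    _ ≤ ‖A ^ 2‖ * ‖B ^ 2‖ := norm_mul_le _ _
    _ = s ^ 2 := by rw [mul_pow, Real.sq_sqrt (norm_nonneg _), Real.sq_sqrt (norm_nonneg _)]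
  have h1 : ‖(1 : H →L[ℂ] H)‖ ≤ 1 := ContinuousLinearMap.norm_id_le
  have hr : spectralRadius ℂ (A * B) ≤ ENNReal.ofReal (min ‖A * B‖ s) := by
    rw [ENNReal.ofReal_min]
    exact le_min (spectralRadius_le_ofReal_of_norm_pow_le h1 one_ne_zero (norm_nonneg _)
      (by rw [pow_one, pow_one])) (spectralRadius_le_ofReal_of_norm_pow_le h1 two_ne_zero hs hsq)
  have hexp : ∑' n : ℕ, ((n.factorial : ℂ))⁻¹ • (A * B) ^ n = exp (A * B) :=
    congrFun (exp_eq_tsum ℂ).symm _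
  rw [hexp]
  calc (spectralRadius ℂ (exp (A * B))).toReal ≤ Real.exp (min ‖A * B‖ s) :=
        ENNReal.toReal_le_of_le_ofReal (Real.exp_pos _).le
          (spectralRadius_exp_le (le_min (norm_nonneg _) hs) hr)
    _ ≤ _ := by
        linarith [Real.exp_le_exp.2 (min_le_left ‖A * B‖ s),
          Real.exp_le_exp.2 (min_le_right ‖A * B‖ s)]
end
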